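/- arXiv:2512.06056 — 9 statements merged into one kernel-verified Lean document; each statement's English description precedes it below -/
import Mathlib

section
/- Let x, y, B, k be positive integers. Then x/y = y + x/B^k (as an equation of rational numbers) holds if and only if (x + 2·B^k·y)^2 + (2·B^(2k))^2 = (x + 2·B^(2k))^2. -/
/-! Write `N = B ^ k`. Clearing denominators turns the rational equation into
`x N = y² N + x y`, and expanding the squares shows that the Pythagorean relation is this
same equation multiplied by `4 N`. -/

theorem div_eq_add_div_iff_mul_eq {K : Type*} [Field K] {x y N : K} (hN : N ≠ 0) :
    x / y = y + x / N ↔ x * N = y ^ 2 * N + x * y := by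
  -- for `y = 0` both sides say `x = 0`, by the convention `x / 0 = 0`
  rcases eq_or_ne y 0 with rfl | hy
  · simp [hN, eq_comm]
  · field_simp

theorem pythagorean_iff_mul_eq {x y N : ℕ} (hN : N ≠ 0) :
    (x + 2 * N * y) ^ 2 + (2 * N ^ 2) ^ 2 = (x + 2 * N ^ 2) ^ 2 ↔
      x * N = y ^ 2 * N + x * y := by
  have hlhs : (x + 2 * N * y) ^ 2 + (2 * N ^ 2) ^ 2 =
      4 * N * (y ^ 2 * N + x * y) + (x ^ 2 + 4 * N ^ 4) := by ring
  have hrhs : (x + 2 * N ^ 2) ^ 2 = 4 * N * (x * N) + (x ^ 2 + 4 * N ^ 4) := by ring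
  rw [hlhs, hrhs, add_left_inj, eq_comm]
  exact mul_right_inj' (by positivity)

theorem anomaly_iff_pythagorean_general (x y B k : ℕ)
    (hB : 0 < B) :
    (x : ℚ) / y = y + x / B ^ k ↔
      (x + 2 * B ^ k * y) ^ 2 + (2 * B ^ (2 * k)) ^ 2 = (x + 2 * B ^ (2 * k)) ^ 2 := by
  have hN : B ^ k ≠ 0 := pow_ne_zero k hB.ne'
  rw [div_eq_add_div_iff_mul_eq (by exact_mod_cast hN), pow_mul', pythagorean_iff_mul_eq hN]
  exact_mod_cast Iff.rfl

/-- For positive integers x, y, B, k, the rational equation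
x/y = y + x/B^k holds iff (x + 2·B^k·y)² + (2·B^(2k))² = (x + 2·B^(2k))². -/
theorem anomaly_iff_pythagorean (x y B k : ℕ) (hx : 0 < x) (hy : 0 < y)
    (hB : 0 < B) (hk : 0 < k) :
    (x : ℚ) / y = y + x / B ^ k ↔
      (x + 2 * B ^ k * y) ^ 2 + (2 * B ^ (2 * k)) ^ 2 = (x + 2 * B ^ (2 * k)) ^ 2 :=
  anomaly_iff_pythagorean_general x y B k hB
end

section
/- Suppose (a, b, c) is a Pythagorean triple (positive integers with a^2 + b^2 = c^2) such that ν₂(a) > ν₂(b) ≥ 1, where ν₂ denotes the 2-adic valuation. Then there exist unique positive integers ℓ, m, n such that (a, b, c) = (ℓ(m² − n²), ℓ·2mn, ℓ(m² + n²)); moreover these satisfy m > n, and m and n are both odd and coprime. -/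
/-!
Dividing by `g = gcd a b` leaves a primitive triple `(a₁, b₁, c₁)`; since `ν₂ a > ν₂ b ≥ 1`, the leg
`b₁` is odd and `g = 2ℓ` is even. The odd leg of a primitive triple is `b₁ = mn` with
`2a₁ = m² - n²` and `2c₁ = m² + n²` for odd coprime `m > n` (from Euclid's parameters `M, N`
take `m = M + N`, `n = M - N`), which gives the parametrization. For uniqueness, `c + a = 2ℓm²`
and `c - a = 2ℓn²`, and coprimality of `m, n` determines `ℓ, m, n` from `ℓm²` and `ℓn²`.
-/

theorem PythagoreanTriple.exists_odd_param_of_coprime {x y z : ℤ} (h : PythagoreanTriple x y z)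
    (hco : Int.gcd x y = 1) (hx : x % 2 = 1) (hz : 0 < z) :
    ∃ m n : ℤ, x = m * n ∧ 2 * y = m ^ 2 - n ^ 2 ∧ 2 * z = m ^ 2 + n ^ 2 ∧
      Odd m ∧ Odd n ∧ IsCoprime m n := by
  obtain ⟨M, N, rfl, rfl, rfl, hMN, hpar, -⟩ := h.coprime_classification' hco hx hz
  have hodd : Odd (M + N) := Int.odd_iff.mpr (by omega)
  have hcop : IsCoprime (M + N) M := by
    simpa only [mul_one, add_comm N] using
      (Int.isCoprime_iff_gcd_eq_one.mpr hMN).symm.add_mul_left_left 1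
  have hcop' : IsCoprime (M + N) (2 * M + (M + N) * (-1)) :=
    IsCoprime.add_mul_left_right_iff.mpr ((Int.isCoprime_two_right.mpr hodd).mul_right hcop)
  refine ⟨M + N, M - N, by ring, by ring, by ring, hodd, Int.odd_iff.mpr (by omega), ?_⟩
  convert hcop' using 1
  ring

theorem exists_odd_param_of_sq_add_sq_of_coprime {x y z : ℕ} (h : x ^ 2 + y ^ 2 = z ^ 2)
    (hco : x.Coprime y) (hx : Odd x) (hy : 0 < y) :
    ∃ m n : ℕ, n < m ∧ Odd m ∧ Odd n ∧ m.Coprime n ∧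
      x = m * n ∧ 2 * y = m ^ 2 - n ^ 2 ∧ 2 * z = m ^ 2 + n ^ 2 := by
  have hPT : PythagoreanTriple (x : ℤ) y z := by
    simp only [PythagoreanTriple, ← sq]
    exact_mod_cast h
  have hz : 0 < z := Nat.pos_of_ne_zero (by rintro rfl; simp at h; omega)
  obtain ⟨m, n, hxmn, hymn, hzmn, hm, hn, hmn⟩ :=
    hPT.exists_odd_param_of_coprime (by rwa [Int.gcd_natCast_natCast]) (Int.odd_iff.mp hx.natCast)
      (by exact_mod_cast hz)
  have hlt : n.natAbs ^ 2 < m.natAbs ^ 2 := by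
    zify
    rw [sq_abs, sq_abs]
    omega
  refine ⟨m.natAbs, n.natAbs, (Nat.pow_lt_pow_iff_left two_ne_zero).mp hlt,
    Int.natAbs_odd.mpr hm, Int.natAbs_odd.mpr hn, Int.isCoprime_iff_gcd_eq_one.mp hmn, ?_, ?_, ?_⟩
  · rw [← Int.natAbs_mul, ← hxmn, Int.natAbs_natCast]
  · zify [hlt.le]
    rwa [sq_abs, sq_abs]
  · zify
    rwa [sq_abs, sq_abs]

theorem Nat.Coprime.not_dvd_of_padicValNat_lt {p a b : ℕ} (hp : p.Prime) (hco : a.Coprime b)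
    (h : padicValNat p b < padicValNat p a) : ¬ p ∣ b := fun hpb ↦
  hp.ne_one (Nat.eq_one_of_dvd_coprimes hco (dvd_of_one_le_padicValNat (by omega)) hpb)

theorem eq_of_mul_sq_eq_mul_sq {l m n l' m' n' : ℕ} (hl : l ≠ 0) (hco : m.Coprime n)
    (hco' : m'.Coprime n') (hm : l * m ^ 2 = l' * m' ^ 2) (hn : l * n ^ 2 = l' * n' ^ 2) :
    l = l' ∧ m = m' ∧ n = n' := by
  have hmn : m ^ 2 + n ^ 2 ≠ 0 := by
    intro h
    simp_all
  have hl' : l' ≠ 0 := by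
    rintro rfl
    simp_all
  have hcross : m * n' = m' * n := by
    refine Nat.pow_left_injective two_ne_zero (Nat.eq_of_mul_eq_mul_left
      (Nat.pos_of_ne_zero (Nat.mul_ne_zero hl hl')) ?_)
    calc l * l' * (m * n') ^ 2 = l * m ^ 2 * (l' * n' ^ 2) := by ring
      _ = l' * m' ^ 2 * (l * n ^ 2) := by rw [hm, hn]
      _ = l * l' * (m' * n) ^ 2 := by ring
  have hmm' : m = m' := Nat.dvd_antisymm (hco.dvd_of_dvd_mul_right ⟨n', hcross.symm⟩)
    (hco'.dvd_of_dvd_mul_right ⟨n, hcross⟩)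
  have hnn' : n = n' := Nat.dvd_antisymm
    (hco.symm.dvd_of_dvd_mul_left (Dvd.intro_left m' hcross.symm))
    (hco'.symm.dvd_of_dvd_mul_left (Dvd.intro_left m hcross))
  subst hmm' hnn'
  refine ⟨Nat.eq_of_mul_eq_mul_right (Nat.pos_of_ne_zero hmn) ?_, rfl, rfl⟩
  rw [mul_add, mul_add, hm, hn]

theorem eq_of_mul_sq_sub_sq_eq {l m n l' m' n' : ℕ} (hl : l ≠ 0) (hnm : n ≤ m) (hnm' : n' ≤ m')
    (hco : m.Coprime n) (hco' : m'.Coprime n')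
    (hsub : l * (m ^ 2 - n ^ 2) = l' * (m' ^ 2 - n' ^ 2))
    (hadd : l * (m ^ 2 + n ^ 2) = l' * (m' ^ 2 + n' ^ 2)) :
    l = l' ∧ m = m' ∧ n = n' := by
  zify [Nat.pow_le_pow_left hnm 2, Nat.pow_le_pow_left hnm' 2] at hsub hadd
  exact eq_of_mul_sq_eq_mul_sq hl hco hco' (by zify; linarith) (by zify; linarith)

theorem exists_flipped_param {a b c : ℕ} (h : a ^ 2 + b ^ 2 = c ^ 2)
    (hv : padicValNat 2 b < padicValNat 2 a) (hv1 : 1 ≤ padicValNat 2 b) :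
    ∃ l m n : ℕ, 0 < l ∧ n < m ∧ Odd m ∧ Odd n ∧ m.Coprime n ∧
      a = l * (m ^ 2 - n ^ 2) ∧ b = l * (2 * m * n) ∧ c = l * (m ^ 2 + n ^ 2) := by
  have hb : b ≠ 0 := by rintro rfl; simp at hv1
  obtain ⟨g, a₁, b₁, hg, hco, rfl, rfl⟩ :=
    Nat.exists_coprime' (Nat.gcd_pos_of_pos_right a hb.bot_lt)
  have ha₁ : a₁ ≠ 0 := by rintro rfl; simp at hv
  have hb₁ : b₁ ≠ 0 := left_ne_zero_of_mul hb
  obtain ⟨c₁, rfl⟩ : g ∣ c :=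
    (Nat.pow_dvd_pow_iff two_ne_zero).mp ⟨a₁ ^ 2 + b₁ ^ 2, by rw [← h]; ring⟩
  have h₁ : b₁ ^ 2 + a₁ ^ 2 = c₁ ^ 2 := by
    refine Nat.eq_of_mul_eq_mul_left (pow_pos hg 2) ?_
    calc g ^ 2 * (b₁ ^ 2 + a₁ ^ 2) = (a₁ * g) ^ 2 + (b₁ * g) ^ 2 := by ring
      _ = (g * c₁) ^ 2 := h
      _ = g ^ 2 * c₁ ^ 2 := by ring
  simp only [padicValNat.mul hb₁ hg.ne', padicValNat.mul ha₁ hg.ne'] at hv hv1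
  have h2b₁ : ¬ 2 ∣ b₁ := hco.not_dvd_of_padicValNat_lt Nat.prime_two (by omega)
  rw [padicValNat.eq_zero_of_not_dvd h2b₁] at hv1
  obtain ⟨l, rfl⟩ : 2 ∣ g := dvd_of_one_le_padicValNat (by omega)
  obtain ⟨m, n, hnm, hm, hn, hmn, rfl, ha₁mn, hc₁mn⟩ :=
    exists_odd_param_of_sq_add_sq_of_coprime h₁ hco.symm
      (Nat.odd_iff.mpr (Nat.two_dvd_ne_zero.mp h2b₁)) ha₁.bot_lt
  refine ⟨l, m, n, by omega, hnm, hm, hn, hmn, ?_, by ring, ?_⟩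
  · rw [← ha₁mn]; ring
  · rw [← hc₁mn]; ring

theorem pythagorean_flipped_param_general (a b c : ℕ)
    (hpyth : a ^ 2 + b ^ 2 = c ^ 2)
    (hv : padicValNat 2 b < padicValNat 2 a) (hv1 : 1 ≤ padicValNat 2 b) :
    ∃! lmn : ℕ × ℕ × ℕ,
      0 < lmn.1 ∧ 0 < lmn.2.1 ∧ 0 < lmn.2.2 ∧
      a = lmn.1 * (lmn.2.1 ^ 2 - lmn.2.2 ^ 2) ∧
      b = lmn.1 * (2 * lmn.2.1 * lmn.2.2) ∧
      c = lmn.1 * (lmn.2.1 ^ 2 + lmn.2.2 ^ 2) ∧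
      lmn.2.2 < lmn.2.1 ∧ Odd lmn.2.1 ∧ Odd lmn.2.2 ∧
      Nat.Coprime lmn.2.1 lmn.2.2 := by
  obtain ⟨l, m, n, hl, hnm, hm, hn, hmn, rfl, rfl, rfl⟩ := exists_flipped_param hpyth hv hv1
  refine ⟨(l, m, n), ⟨hl, hm.pos, hn.pos, rfl, rfl, rfl, hnm, hm, hn, hmn⟩, ?_⟩
  rintro ⟨l', m', n'⟩ ⟨-, -, -, hsub, -, hadd, hnm', -, -, hmn'⟩
  obtain ⟨rfl, rfl, rfl⟩ := eq_of_mul_sq_sub_sq_eq hl.ne' hnm.le hnm'.le hmn hmn' hsub hadd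
  rfl

/-- If (a, b, c) is a Pythagorean triple with ν₂(a) > ν₂(b) ≥ 1,
then there exist unique positive integers ℓ, m, n with
(a, b, c) = (ℓ(m² − n²), ℓ·2mn, ℓ(m² + n²)); moreover m > n, and m, n are both
odd and coprime. -/
theorem pythagorean_flipped_param (a b c : ℕ) (ha : 0 < a) (hb : 0 < b) (hc : 0 < c)
    (hpyth : a ^ 2 + b ^ 2 = c ^ 2)
    (hv : padicValNat 2 b < padicValNat 2 a) (hv1 : 1 ≤ padicValNat 2 b) :
    ∃! lmn : ℕ × ℕ × ℕ,
      0 < lmn.1 ∧ 0 < lmn.2.1 ∧ 0 < lmn.2.2 ∧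
      a = lmn.1 * (lmn.2.1 ^ 2 - lmn.2.2 ^ 2) ∧
      b = lmn.1 * (2 * lmn.2.1 * lmn.2.2) ∧
      c = lmn.1 * (lmn.2.1 ^ 2 + lmn.2.2 ^ 2) ∧
      lmn.2.2 < lmn.2.1 ∧ Odd lmn.2.1 ∧ Odd lmn.2.2 ∧
      Nat.Coprime lmn.2.1 lmn.2.2 :=
  pythagorean_flipped_param_general a b c hpyth hv hv1
end

section
/- If (x, y, B, k) is a digital anomaly, then there exist unique positive integers t, m, n with m > n and gcd(m, n) = 1 such that x = t·m·(m − n)², y² = t·n·(m − n)², and B^(2k) = m²·t·n (equivalently, (x, y, B^k) = (t·m·(m−n)², √(tn)·(m−n), m·√(tn))); moreover these parameters satisfy t·(m − n)⁴ < n and n^(k−1) ≤ m²·t^(k+1)·(m − n)^(4k). -/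
/-!
With `N = B ^ k`, clearing denominators gives `x (N - y) = y² N`, so `y < N`. Write
`N = g m`, `N - y = g n` with `g = gcd(N, N - y)` and `m, n` coprime; then `y = g (m - n)` and
`x n = g² m (m - n)²`. As `n` is coprime to `m (m - n)`, it divides `g²`, and `t = g² / n`.
Conversely, `N² = m² t n` forces `m ∣ N`, and the scale `N / m` is then `gcd(N, N - y)`, which
pins down `(t, m, n)`. The two inequalities are `x < N` squared and `B ^ (k - 1) ≤ x` raised to
the power `2k`, divided by `m² t` and `(m² t) ^ (k - 1)` respectively.
-/

/-- Positive integers (x, y, B, k) form a digital anomaly if x/y = y + x/B^k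
as rational numbers, B ≥ 2, and B^(k-1) ≤ x < B^k. -/
def IsDigitalAnomaly (x y B k : ℕ) : Prop :=
  0 < x ∧ 0 < y ∧ 2 ≤ B ∧ 0 < k ∧
    (x : ℚ) / y = y + x / B ^ k ∧ B ^ (k - 1) ≤ x ∧ x < B ^ k

/-- `(t, m, n)` parametrizes `(x, y, N)`, where `N` plays the role of `B ^ k`:
`(x, y, N) = (t m (m - n)², √(tn) (m - n), m √(tn))`. -/
def IsAnomalyParam (x y N t m n : ℕ) : Prop :=
  0 < t ∧ 0 < m ∧ 0 < n ∧ n < m ∧ m.Coprime n ∧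
    x = t * m * (m - n) ^ 2 ∧ y ^ 2 = t * n * (m - n) ^ 2 ∧ N ^ 2 = m ^ 2 * t * n

theorem lt_and_mul_sub_eq_of_div_eq {x y N : ℕ} (hy : 0 < y) (hN : 0 < N)
    (h : (x : ℚ) / y = y + x / N) : y < N ∧ x * (N - y) = y ^ 2 * N := by
  have hcleared : x * N = y ^ 2 * N + x * y := by
    field_simp at h
    exact_mod_cast (by linear_combination h : (x : ℚ) * N = y ^ 2 * N + x * y)
  have hyN : y < N := by
    by_contra! hNy
    have : 0 < y ^ 2 * N := by positivity
    nlinarith [Nat.mul_le_mul_left x hNy]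
  refine ⟨hyN, ?_⟩
  rw [Nat.mul_sub]
  omega

theorem exists_isAnomalyParam {x y N : ℕ} (hy : 0 < y) (hyN : y < N)
    (h : x * (N - y) = y ^ 2 * N) : ∃ t m n, IsAnomalyParam x y N t m n := by
  obtain ⟨g, m, n, hg, hcop, hNm, hNn⟩ :=
    Nat.exists_coprime' (Nat.gcd_pos_of_pos_left (N - y) (hy.trans hyN))
  have hn : 0 < n := Nat.pos_of_mul_pos_right (hNn ▸ Nat.sub_pos_of_lt hyN)
  have hnm : n < m := Nat.lt_of_mul_lt_mul_right (a := g) (by omega)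
  have hy_eq : y = g * (m - n) := by rw [mul_comm, Nat.sub_mul]; omega
  have hxn : x * n = g ^ 2 * m * (m - n) ^ 2 := by
    refine Nat.eq_of_mul_eq_mul_left hg ?_
    calc g * (x * n) = x * (N - y) := by rw [hNn]; ring
      _ = g * (g ^ 2 * m * (m - n) ^ 2) := by rw [h, hy_eq, hNm]; ring
  -- `n` is coprime to both `m` and `m - n`, so it divides the factor `g ^ 2`.
  have hn_dvd : n ∣ g ^ 2 := by
    have hcop' : n.Coprime (m * (m - n) ^ 2) :=
      hcop.symm.mul_right (((Nat.coprime_sub_self_left hnm.le).mpr hcop).symm.pow_right 2)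
    exact hcop'.dvd_of_dvd_mul_right ⟨x, by rw [← mul_assoc, ← hxn, mul_comm]⟩
  obtain ⟨t, hgt⟩ := hn_dvd
  have htn : g ^ 2 = t * n := by rw [hgt, mul_comm]
  have ht : 0 < t := Nat.pos_of_mul_pos_right (htn ▸ pow_pos hg 2)
  refine ⟨t, m, n, ht, by omega, hn, hnm, hcop, ?_, ?_, ?_⟩
  · refine Nat.eq_of_mul_eq_mul_right hn ?_
    rw [hxn, htn]; ring
  · rw [hy_eq, mul_pow, htn]
  · rw [hNm, mul_pow, htn]; ring

theorem IsAnomalyParam.exists_scale {x y N t m n : ℕ} (h : IsAnomalyParam x y N t m n) :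
    ∃ g, N = g * m ∧ y = g * (m - n) ∧ t * n = g ^ 2 := by
  obtain ⟨ht, hm, hn, hnm, -, -, hy, hN⟩ := h
  obtain ⟨g, hg⟩ : m ∣ N := (Nat.pow_dvd_pow_iff two_ne_zero).mp ⟨t * n, by rw [hN]; ring⟩
  have htn : t * n = g ^ 2 := by
    refine Nat.eq_of_mul_eq_mul_left (pow_pos hm 2) ?_
    rw [← mul_assoc, ← hN, hg]; ring
  refine ⟨g, by rw [hg, mul_comm], Nat.pow_left_injective two_ne_zero ?_, htn⟩
  simp only [hy, htn, mul_pow]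

theorem IsAnomalyParam.eq_mul_gcd {x y N t m n : ℕ} (h : IsAnomalyParam x y N t m n) :
    N = N.gcd (N - y) * m ∧ N - y = N.gcd (N - y) * n ∧ t * n = N.gcd (N - y) ^ 2 := by
  obtain ⟨g, hNg, hyg, htn⟩ := h.exists_scale
  obtain ⟨-, -, -, hnm, hcop, -⟩ := h
  have hNy : N - y = g * n := by
    rw [hNg, hyg, Nat.mul_sub, Nat.sub_sub_self (Nat.mul_le_mul_left g hnm.le)]
  have hgcd : N.gcd (N - y) = g := by
    rw [hNy, hNg, Nat.gcd_mul_left, hcop, mul_one]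
  rw [hgcd]
  exact ⟨hNg, hNy, htn⟩

theorem IsAnomalyParam.unique {x y N t m n t' m' n' : ℕ} (h : IsAnomalyParam x y N t m n)
    (h' : IsAnomalyParam x y N t' m' n') : t = t' ∧ m = m' ∧ n = n' := by
  obtain ⟨hNm, hNn, htn⟩ := h.eq_mul_gcd
  obtain ⟨hNm', hNn', htn'⟩ := h'.eq_mul_gcd
  obtain ⟨ht, -, hn, -⟩ := h
  have hg : 0 < N.gcd (N - y) := (pow_pos_iff two_ne_zero).mp (htn ▸ Nat.mul_pos ht hn)
  have hm : m = m' := Nat.eq_of_mul_eq_mul_left hg (hNm.symm.trans hNm')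
  have hn' : n = n' := Nat.eq_of_mul_eq_mul_left hg (hNn.symm.trans hNn')
  subst hm hn'
  exact ⟨Nat.eq_of_mul_eq_mul_right hn (htn.trans htn'.symm), rfl, rfl⟩

theorem IsAnomalyParam.mul_sub_pow_four_lt {x y N t m n : ℕ} (h : IsAnomalyParam x y N t m n)
    (hxN : x < N) : t * (m - n) ^ 4 < n := by
  obtain ⟨-, -, -, -, -, hx, -, hN⟩ := h
  refine Nat.lt_of_mul_lt_mul_left (a := m ^ 2 * t) ?_
  calc m ^ 2 * t * (t * (m - n) ^ 4) = x ^ 2 := by rw [hx]; ring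
    _ < N ^ 2 := Nat.pow_lt_pow_left hxN two_ne_zero
    _ = m ^ 2 * t * n := hN

theorem IsAnomalyParam.pow_le_mul_pow {x y b j t m n : ℕ}
    (h : IsAnomalyParam x y (b ^ (j + 1)) t m n) (hbx : b ^ j ≤ x) :
    n ^ j ≤ m ^ 2 * t ^ (j + 2) * (m - n) ^ (4 * (j + 1)) := by
  obtain ⟨ht, hm, -, -, -, hx, -, hN⟩ := h
  refine Nat.le_of_mul_le_mul_left (c := (m ^ 2 * t) ^ j) ?_ (by positivity)
  calc (m ^ 2 * t) ^ j * n ^ j = (b ^ j) ^ (2 * (j + 1)) := by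
        rw [← mul_pow, ← hN]; ring
    _ ≤ x ^ (2 * (j + 1)) := Nat.pow_le_pow_left hbx _
    _ = (m ^ 2 * t) ^ j * (m ^ 2 * t ^ (j + 2) * (m - n) ^ (4 * (j + 1))) := by rw [hx]; ring

/-- If (x, y, B, k) is a digital anomaly, then there exist unique
positive integers t, m, n with m > n, gcd(m, n) = 1 such that
x = t·m·(m − n)², y² = t·n·(m − n)², B^(2k) = m²·t·n; moreover
t·(m − n)⁴ < n and n^(k−1) ≤ m²·t^(k+1)·(m − n)^(4k). -/
theorem digitalAnomaly_param (x y B k : ℕ) (h : IsDigitalAnomaly x y B k) :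
    (∃! tmn : ℕ × ℕ × ℕ,
      0 < tmn.1 ∧ 0 < tmn.2.1 ∧ 0 < tmn.2.2 ∧
      tmn.2.2 < tmn.2.1 ∧ Nat.Coprime tmn.2.1 tmn.2.2 ∧
      x = tmn.1 * tmn.2.1 * (tmn.2.1 - tmn.2.2) ^ 2 ∧
      y ^ 2 = tmn.1 * tmn.2.2 * (tmn.2.1 - tmn.2.2) ^ 2 ∧
      B ^ (2 * k) = tmn.2.1 ^ 2 * tmn.1 * tmn.2.2) ∧
    (∀ t m n : ℕ, 0 < t → 0 < m → 0 < n → n < m → Nat.Coprime m n →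
      x = t * m * (m - n) ^ 2 → y ^ 2 = t * n * (m - n) ^ 2 →
      B ^ (2 * k) = m ^ 2 * t * n →
      t * (m - n) ^ 4 < n ∧ n ^ (k - 1) ≤ m ^ 2 * t ^ (k + 1) * (m - n) ^ (4 * k)) := by
  obtain ⟨-, hy, hB, hk, heq, hlow, hhigh⟩ := h
  obtain ⟨hyN, hcleared⟩ :=
    lt_and_mul_sub_eq_of_div_eq (N := B ^ k) hy (by positivity) (by exact_mod_cast heq)
  have hB2k : B ^ (2 * k) = (B ^ k) ^ 2 := pow_mul' B 2 k
  refine ⟨?_, fun t m n ht hm hn hnm hcop hx hy2 hBk ↦ ?_⟩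
  · obtain ⟨t, m, n, hp⟩ := exists_isAnomalyParam hy hyN hcleared
    refine ⟨(t, m, n), hB2k ▸ hp, fun ⟨t', m', n'⟩ hp' ↦ ?_⟩
    obtain ⟨rfl, rfl, rfl⟩ := IsAnomalyParam.unique (hB2k ▸ hp') hp
    rfl
  · have hp : IsAnomalyParam x y (B ^ k) t m n := ⟨ht, hm, hn, hnm, hcop, hx, hy2, hB2k ▸ hBk⟩
    obtain ⟨j, rfl⟩ : ∃ j, k = j + 1 := ⟨k - 1, by omega⟩
    exact ⟨hp.mul_sub_pow_four_lt hhigh, hp.pow_le_mul_pow (by simpa using hlow)⟩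
end

section
/- Let x, y, B, k be positive integers with B ≥ 2, and suppose there exist positive integers t, m, n with m > n and gcd(m, n) = 1 such that x = t·m·(m − n)², y² = t·n·(m − n)², B^(2k) = m²·t·n, t·(m − n)⁴ < n, and n^(k−1) ≤ m²·t^(k+1)·(m − n)^(4k). Then (x, y, B, k) is a digital anomaly. -/
/-- Converse of the parametrization: the parametric data with the
two inequalities produce a digital anomaly. -/
theorem digitalAnomaly_param_converse (x y B k : ℕ) (hx : 0 < x) (hy : 0 < y)
    (hB : 2 ≤ B) (hk : 0 < k)
    (t m n : ℕ) (ht : 0 < t) (hm : 0 < m) (hn : 0 < n)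
    (hmn : n < m) (hcop : Nat.Coprime m n)
    (hxe : x = t * m * (m - n) ^ 2)
    (hye : y ^ 2 = t * n * (m - n) ^ 2)
    (hBe : B ^ (2 * k) = m ^ 2 * t * n)
    (hineq1 : t * (m - n) ^ 4 < n)
    (hineq2 : n ^ (k - 1) ≤ m ^ 2 * t ^ (k + 1) * (m - n) ^ (4 * k)) :
    IsDigitalAnomaly x y B k := by
  obtain ⟨j, rfl⟩ : ∃ j, k = j + 1 := ⟨k - 1, by omega⟩
  set c := m - n with hc
  have hm' : m = n + c := by omega
  -- lemma B : x = y^2 + t*c^3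
  have hxB : x = y ^ 2 + t * c ^ 3 := by rw [hxe, hye, hm']; ring
  -- lemma A : x*y = B^(j+1) * (t*c^3)
  have hA2 : (x * y) ^ 2 = (B ^ (j+1) * (t * c ^ 3)) ^ 2 := by
    calc (x * y) ^ 2 = (t * m * c ^ 2) ^ 2 * y ^ 2 := by rw [hxe]; ring
      _ = (t * m * c ^ 2) ^ 2 * (t * n * c ^ 2) := by rw [hye]
      _ = (m ^ 2 * t * n) * (t ^ 2 * c ^ 6) := by ring
      _ = B ^ (2 * (j+1)) * (t ^ 2 * c ^ 6) := by rw [hBe]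
      _ = (B ^ (j+1) * (t * c ^ 3)) ^ 2 := by ring
  have hA : x * y = B ^ (j+1) * (t * c ^ 3) :=
    Nat.pow_left_injective (by norm_num) hA2
  -- nat key identity
  have hkeyN : x * B ^ (j+1) = y ^ 2 * B ^ (j+1) + x * y := by
    rw [hA, hxB]; ring
  refine ⟨hx, hy, hB, hk, ?_, ?_, ?_⟩
  · have hy0 : (y : ℚ) ≠ 0 := Nat.cast_ne_zero.mpr hy.ne'
    have hB0 : (B : ℚ) ^ (j+1) ≠ 0 := by positivity
    have hkeyQ : (x : ℚ) * B ^ (j+1) = y ^ 2 * B ^ (j+1) + x * y := by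
      exact_mod_cast hkeyN
    field_simp
    linear_combination hkeyQ
  · -- B^j ≤ x
    have hineq2' : n ^ j ≤ m ^ 2 * t ^ (j + 2) * c ^ (4 * (j+1)) := by
      simpa using hineq2
    have key : (B ^ j) ^ (2 * (j+1)) ≤ x ^ (2 * (j+1)) := by
      have h1 : (B ^ j) ^ (2 * (j+1)) = (m ^ 2 * t * n) ^ j := by
        rw [← pow_mul, mul_comm j (2 * (j+1)), pow_mul, hBe]
      have h2 : x ^ (2 * (j+1))
          = (m ^ 2 * t) ^ j * (m ^ 2 * t ^ (j + 2) * c ^ (4 * (j+1))) := by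
        rw [hxe]; ring
      rw [h1, h2]
      calc (m ^ 2 * t * n) ^ j = (m ^ 2 * t) ^ j * n ^ j := by ring
        _ ≤ (m ^ 2 * t) ^ j * (m ^ 2 * t ^ (j + 2) * c ^ (4 * (j+1))) :=
            Nat.mul_le_mul_left _ hineq2'
    have := Nat.pow_le_pow_iff_left (n := 2 * (j+1)) (by omega) |>.mp key
    simpa using this
  · -- x < B^(j+1)
    have hc0 : 0 < c := by omega
    have key : x ^ 2 < (B ^ (j+1)) ^ 2 := by
      have h1 : (B ^ (j+1)) ^ 2 = (m ^ 2 * t) * n := by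
        rw [← pow_mul, mul_comm (j+1) 2, hBe]
      have h2 : x ^ 2 = (m ^ 2 * t) * (t * c ^ 4) := by rw [hxe]; ring
      rw [h1, h2]
      exact (mul_lt_mul_iff_right₀ (by positivity)).mpr hineq1
    exact lt_of_pow_lt_pow_left₀ 2 (Nat.zero_le _) key
end

section
/- If (x, y, B, k) is a digital anomaly, then for any positive integers t, m, n with m > n and gcd(m, n) = 1 satisfying x = t·m·(m − n)², y² = t·n·(m − n)², and B^(2k) = m²·t·n, we have B^k < mn/(m − n)² ≤ B^(k+1) (as an inequality of rational numbers). -/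
/-!
The parametrisation gives `x · mn = B^(2k) (m - n)²`, so `mn/(m - n)² = (B^k)²/x`.
Since `x` has exactly `k` digits, `B^k/B ≤ x < B^k`, which places `(B^k)²/x` in `(B^k, B · B^k]`.
-/

lemma lt_sq_div_and_sq_div_le_mul {K : Type*} [Field K] [LinearOrder K] [IsStrictOrderedRing K]
    {a b x : K} (hx : 0 < x) (hlo : a ≤ b * x) (hhi : x < a) :
    a < a ^ 2 / x ∧ a ^ 2 / x ≤ b * a := by
  have ha : 0 < a := hx.trans hhi
  constructor
  · rw [lt_div_iff₀ hx, sq]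
    exact mul_lt_mul_of_pos_left hhi ha
  · rw [div_le_iff₀ hx, sq, mul_right_comm]
    exact mul_le_mul_of_nonneg_right hlo ha.le

lemma pow_le_mul_of_pow_pred_le {B x k : ℕ} (hk : 0 < k) (h : B ^ (k - 1) ≤ x) :
    B ^ k ≤ B * x := by
  calc B ^ k = B * B ^ (k - 1) := by rw [← pow_succ', Nat.sub_add_cancel hk]
    _ ≤ B * x := Nat.mul_le_mul_left B h

lemma mul_div_sub_sq_eq_pow_div {x B k t m n : ℕ} (hx : 0 < x) (hmn : n < m)
    (hxe : x = t * m * (m - n) ^ 2) (hBe : B ^ (2 * k) = m ^ 2 * t * n) :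
    (m * n : ℚ) / ((m : ℚ) - n) ^ 2 = (B : ℚ) ^ (2 * k) / x := by
  have hsub : ((m - n : ℕ) : ℚ) = (m : ℚ) - n := Nat.cast_sub hmn.le
  have hsub_pos : (0 : ℚ) < (m : ℚ) - n := by rw [← hsub]; exact_mod_cast Nat.sub_pos_of_lt hmn
  have hcross : m * n * x = B ^ (2 * k) * (m - n) ^ 2 := by rw [hBe, hxe]; ring
  rw [div_eq_div_iff (by positivity) (by positivity), ← hsub]
  exact_mod_cast hcross

theorem digitalAnomaly_k_bounds_general (x y B k : ℕ) (h : IsDigitalAnomaly x y B k)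
    (t m n : ℕ)
    (hmn : n < m)
    (hxe : x = t * m * (m - n) ^ 2)
    (hBe : B ^ (2 * k) = m ^ 2 * t * n) :
    (B : ℚ) ^ k < (m * n : ℚ) / ((m : ℚ) - n) ^ 2 ∧
      (m * n : ℚ) / ((m : ℚ) - n) ^ 2 ≤ (B : ℚ) ^ (k + 1) := by
  obtain ⟨hx, -, -, hk, -, hlo, hhi⟩ := h
  have hlo' : (B : ℚ) ^ k ≤ B * x := by exact_mod_cast pow_le_mul_of_pow_pred_le hk hlo
  rw [mul_div_sub_sq_eq_pow_div hx hmn hxe hBe, pow_mul', pow_succ' (B : ℚ) k]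
  exact lt_sq_div_and_sq_div_le_mul (by exact_mod_cast hx) hlo' (by exact_mod_cast hhi)

/-- For a digital anomaly with parameters (t, m, n),
B^k < mn/(m − n)² ≤ B^(k+1) as rational numbers. -/
theorem digitalAnomaly_k_bounds (x y B k : ℕ) (h : IsDigitalAnomaly x y B k)
    (t m n : ℕ) (ht : 0 < t) (hm : 0 < m) (hn : 0 < n)
    (hmn : n < m) (hcop : Nat.Coprime m n)
    (hxe : x = t * m * (m - n) ^ 2)
    (hye : y ^ 2 = t * n * (m - n) ^ 2)
    (hBe : B ^ (2 * k) = m ^ 2 * t * n) :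
    (B : ℚ) ^ k < (m * n : ℚ) / ((m : ℚ) - n) ^ 2 ∧
      (m * n : ℚ) / ((m : ℚ) - n) ^ 2 ≤ (B : ℚ) ^ (k + 1) :=
  digitalAnomaly_k_bounds_general x y B k h t m n hmn hxe hBe
end

section
/- If (x, y, B, k) is a digital anomaly, then for any positive integers t, m, n with m > n and gcd(m, n) = 1 satisfying x = t·m·(m − n)², y² = t·n·(m − n)², and B^(2k) = m²·t·n, we have k = ⌈log_B(mn/(m − n)²)⌉ − 1, where log_B denotes the real logarithm in base B and ⌈·⌉ the ceiling function. -/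
/-- For a digital anomaly with parameters (t, m, n),
k = ⌈log_B(mn/(m − n)²)⌉ − 1. -/
theorem digitalAnomaly_k_formula (x y B k : ℕ) (h : IsDigitalAnomaly x y B k)
    (t m n : ℕ) (ht : 0 < t) (hm : 0 < m) (hn : 0 < n)
    (hmn : n < m) (hcop : Nat.Coprime m n)
    (hxe : x = t * m * (m - n) ^ 2)
    (hye : y ^ 2 = t * n * (m - n) ^ 2)
    (hBe : B ^ (2 * k) = m ^ 2 * t * n) :
    (k : ℤ) = ⌈Real.logb B ((m * n : ℝ) / ((m : ℝ) - n) ^ 2)⌉ - 1 := by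
  obtain ⟨hx, hy, hB, hk, heq, hlo, hhi⟩ := h
  have hBR : (1:ℝ) < B := by
    have h2 : (2:ℝ) ≤ B := by exact_mod_cast hB
    linarith
  have hB0 : (0:ℝ) < B := by linarith
  have hxR : (0:ℝ) < x := by exact_mod_cast hx
  have hsubpos : (0:ℝ) < (m:ℝ) - n := by
    have : (n:ℝ) < m := by exact_mod_cast hmn
    linarith
  have hsub : ((m:ℝ) - n) = ((m - n : ℕ) : ℝ) := by
    push_cast [Nat.cast_sub hmn.le]; ring
  have hnat : m * n * x = B ^ (2 * k) * (m - n) ^ 2 := by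
    rw [hxe, hBe]; ring
  have hkey : (m * n : ℝ) / ((m:ℝ) - n) ^ 2 = (B:ℝ) ^ (2 * k) / x := by
    rw [div_eq_div_iff (by positivity) (ne_of_gt hxR), hsub]
    exact_mod_cast hnat
  have hlogBB : Real.logb B B = 1 := Real.logb_self_eq_one hBR
  have hL : Real.logb B ((m * n : ℝ) / ((m:ℝ) - n) ^ 2)
      = 2 * k - Real.logb B x := by
    rw [hkey, Real.logb_div (by positivity) (ne_of_gt hxR), Real.logb_pow,
      hlogBB]
    push_cast; ring
  have hLlt : Real.logb B x < k := by
    have h1 : Real.logb B x < Real.logb B ((B:ℝ) ^ k) :=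
      Real.logb_lt_logb hBR hxR (by exact_mod_cast hhi)
    rwa [Real.logb_pow, hlogBB, mul_one] at h1
  have hLge : (k:ℝ) - 1 ≤ Real.logb B x := by
    have h1 : Real.logb B ((B:ℝ) ^ (k - 1)) ≤ Real.logb B x :=
      Real.logb_le_logb_of_le hBR (by positivity) (by exact_mod_cast hlo)
    rw [Real.logb_pow, hlogBB, mul_one] at h1
    have : ((k - 1 : ℕ) : ℝ) = (k:ℝ) - 1 := by
      push_cast [Nat.cast_sub hk]; ring
    linarith [this ▸ h1]
  have hceil : ⌈Real.logb B ((m * n : ℝ) / ((m:ℝ) - n) ^ 2)⌉ = (k:ℤ) + 1 := by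
    rw [Int.ceil_eq_iff]
    constructor
    · rw [hL]; push_cast; linarith
    · rw [hL]; push_cast; linarith
  rw [hceil]; ring
end

section
/- If (x, y, B, k) is a digital anomaly with gcd(x, y) = 1, then there exists an integer s ≥ 2 such that (x, y, B, k) = (s² + 1, s, (s² + 1)·s, 1). -/
lemma pow_add_two_le (a : ℕ) (ha : 1 ≤ a) : ∀ k, 2 ≤ k → a ^ k + 2 ≤ (a + 1) ^ k := by
  intro k hk
  induction k with
  | zero => omega
  | succ n ih =>
    rcases Nat.lt_or_ge n 2 with hn | hn
    · interval_cases n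
      · omega
      · ring_nf; nlinarith
    · have h1 := ih hn
      have h2 : (a + 1) ^ (n + 1) = (a + 1) ^ n * (a + 1) := pow_succ _ _
      have h3 : a ^ (n + 1) = a ^ n * a := pow_succ _ _
      nlinarith [pow_pos (show 0 < a by omega) n]

/-- Every digital anomaly with gcd(x, y) = 1 has the form
(x, y, B, k) = (s² + 1, s, (s² + 1)·s, 1) for some integer s ≥ 2. -/
theorem coprime_digitalAnomaly_classification (x y B k : ℕ)
    (h : IsDigitalAnomaly x y B k) (hcop : Nat.gcd x y = 1) :
    ∃ s : ℕ, 2 ≤ s ∧ x = s ^ 2 + 1 ∧ y = s ∧ B = (s ^ 2 + 1) * s ∧ k = 1 := by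
  obtain ⟨hx, hy, hB, hk, heq, hlo, hhi⟩ := h
  have hB0 : (0:ℕ) < B ^ k := pow_pos (by omega) k
  -- clear denominators
  have hN : x * B ^ k = y ^ 2 * B ^ k + x * y := by
    have hy0 : (y:ℚ) ≠ 0 := by positivity
    have hB0' : ((B:ℚ)) ^ k ≠ 0 := by positivity
    field_simp at heq
    have : (x:ℚ) * B ^ k = y ^ 2 * B ^ k + x * y := by ring_nf at heq ⊢; linarith
    exact_mod_cast this
  -- x divides B^k
  have hyBk : y < B ^ k := by nlinarith
  have hdvd : x ∣ y ^ 2 * B ^ k := ⟨B ^ k - y, by rw [Nat.mul_sub]; omega⟩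
  have hcop' : Nat.Coprime x (y ^ 2) := (Nat.coprime_iff_gcd_eq_one.mpr hcop).pow_right 2
  have hxBk : x ∣ B ^ k := (Nat.Coprime.dvd_of_dvd_mul_left hcop' hdvd)
  obtain ⟨m, hm⟩ := hxBk
  have hm0 : 0 < m := by
    rcases Nat.eq_zero_or_pos m with h0 | h0
    · rw [h0, mul_zero] at hm; omega
    · exact h0
  have h2 : x * m = y ^ 2 * m + y := by
    have hN' : x * (x * m) = y ^ 2 * (x * m) + x * y := by rw [← hm]; exact hN
    exact Nat.eq_of_mul_eq_mul_left hx (by rw [hN']; ring)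
  have hxy2 : y ^ 2 < x := by nlinarith
  set d := x - y ^ 2 with hdd
  have hd : x = y ^ 2 + d := by omega
  have hd0 : 0 < d := by omega
  have hmd : d * m = y := by
    have h3 : (y ^ 2 + d) * m = y ^ 2 * m + y := by rw [← hd]; exact h2
    rw [add_mul] at h3
    omega
  have hd1 : d = 1 := by
    have hdy : d ∣ y := ⟨m, hmd.symm⟩
    have hdx : d ∣ x := by
      rw [hd]
      exact Dvd.dvd.add (dvd_pow hdy (by norm_num)) dvd_rfl
    have : d ∣ 1 := hcop ▸ Nat.dvd_gcd hdx hdy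
    exact Nat.dvd_one.mp this
  have hxv : x = y ^ 2 + 1 := by omega
  have hmy : m = y := by rw [hd1, one_mul] at hmd; exact hmd
  have hBk : B ^ k = (y ^ 2 + 1) * y := by rw [hm, hxv, hmy]
  have hy2 : 2 ≤ y := by
    by_contra h0
    have hy1 : y = 1 := by omega
    subst hy1
    simp at hBk hxv
    omega
  -- show k = 1
  have hk1 : k = 1 := by
    by_contra hk1
    have hk2 : 2 ≤ k := by omega
    have hcop2 : Nat.Coprime (y ^ 2 + 1) y := by
      have := (Nat.coprime_add_mul_left_left 1 y y).mpr (Nat.coprime_one_left y)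
      have heq2 : y ^ 2 + 1 = 1 + y * y := by ring
      rwa [heq2]
    have hu1 : IsUnit (gcd y (y ^ 2 + 1)) := by
      rw [Nat.isUnit_iff]
      exact hcop2.symm
    have hu2 : IsUnit (gcd (y ^ 2 + 1) y) := by
      rw [Nat.isUnit_iff]
      exact hcop2
    have hmul : y * (y ^ 2 + 1) = B ^ k := by rw [hBk]; ring
    have hmul2 : (y ^ 2 + 1) * y = B ^ k := hBk.symm
    obtain ⟨c, hc⟩ := exists_eq_pow_of_mul_eq_pow hu1 hmul
    obtain ⟨e, he⟩ := exists_eq_pow_of_mul_eq_pow hu2 hmul2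
    have hc1 : 1 ≤ c := by
      rcases Nat.eq_zero_or_pos c with h0 | h0
      · rw [h0, zero_pow (by omega : k ≠ 0)] at hc
        omega
      · exact h0
    have hek : e ^ k = (c ^ 2) ^ k + 1 := by
      rw [← he, hc, ← pow_mul, mul_comm k 2, pow_mul]
    have hce : c ^ 2 + 1 ≤ e := by
      by_contra hce
      have : e ^ k ≤ (c ^ 2) ^ k := Nat.pow_le_pow_left (by omega) k
      omega
    have h1 : (c ^ 2 + 1) ^ k ≤ e ^ k := Nat.pow_le_pow_left hce k
    have h2 : (c ^ 2) ^ k + 2 ≤ (c ^ 2 + 1) ^ k := pow_add_two_le (c ^ 2) (by nlinarith) k hk2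
    omega
  subst hk1
  refine ⟨y, hy2, hxv, rfl, ?_, rfl⟩
  simpa using hBk
end

section
/- For every integer d > 1 and every positive integer s with gcd(s, d) = 1 and s ≥ d² + 1, the quadruple (x, y, B, k) = ((s² + d)·d², s·d, (s² + d)·s, 1) is a digital anomaly satisfying gcd(x, y) = d. -/
/-! With `x = (s² + d)d²`, `y = sd` and `B = (s² + d)s`, both `x·B` and `y·(y·B + x)` equal
`s d² (s² + d)²`, which is the cleared-denominator form of `x / y = y + x / B`; the one-digit
condition `x < B` is `d² < s`. Since `s² + d ≡ d (mod s)`, the factor `(s² + d)d` is coprime to `s`,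
so `gcd((s² + d)d², sd) = d · gcd((s² + d)d, s) = d`. -/

theorem isDigitalAnomaly_one_of_mul_eq {x y B : ℕ} (hx : 0 < x) (hxB : x < B)
    (h : x * B = y * (y * B + x)) : IsDigitalAnomaly x y B 1 := by
  have hy : 0 < y := Nat.pos_of_ne_zero fun hy0 => by
    subst hy0
    exact (Nat.mul_pos hx (hx.trans hxB)).ne' (by simpa using h)
  refine ⟨hx, hy, by omega, one_pos, ?_, Nat.one_le_iff_ne_zero.mpr hx.ne', by simpa using hxB⟩
  have hBQ : (B : ℚ) ≠ 0 := by exact_mod_cast (hx.trans hxB).ne'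
  have hyQ : (y : ℚ) ≠ 0 := by exact_mod_cast hy.ne'
  have hQ : (x * B : ℚ) = y * (y * B + x) := by exact_mod_cast h
  field_simp
  linear_combination hQ

theorem Nat.gcd_sq_add_mul_sq_mul_eq_of_coprime {s d : ℕ} (hcop : Nat.Coprime s d) :
    Nat.gcd ((s ^ 2 + d) * d ^ 2) (s * d) = d := by
  have hsq : Nat.Coprime (s ^ 2 + d) s := by
    rw [show s ^ 2 + d = d + s * s by ring, Nat.coprime_add_mul_left_left]
    exact hcop.symm
  rw [show (s ^ 2 + d) * d ^ 2 = (s ^ 2 + d) * d * d by ring, Nat.gcd_mul_right,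
    (hsq.mul_left hcop.symm).gcd_eq_one, one_mul]

theorem gcd_d_digitalAnomaly_family_general (d s : ℕ) (hd : 1 < d)
    (hcop : Nat.gcd s d = 1) (hsd : d ^ 2 + 1 ≤ s) :
    IsDigitalAnomaly ((s ^ 2 + d) * d ^ 2) (s * d) ((s ^ 2 + d) * s) 1 ∧
      Nat.gcd ((s ^ 2 + d) * d ^ 2) (s * d) = d := by
  have hd0 : 0 < d := by omega
  refine ⟨isDigitalAnomaly_one_of_mul_eq (by positivity) ?_ (by ring),
    Nat.gcd_sq_add_mul_sq_mul_eq_of_coprime hcop⟩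
  exact Nat.mul_lt_mul_of_pos_left (by omega) (by positivity)

/-- For every integer d > 1 and positive integer s coprime to d
with s ≥ d² + 1, the quadruple ((s² + d)·d², s·d, (s² + d)·s, 1) is a digital
anomaly with gcd(x, y) = d. -/
theorem gcd_d_digitalAnomaly_family (d s : ℕ) (hd : 1 < d) (hs : 0 < s)
    (hcop : Nat.gcd s d = 1) (hsd : d ^ 2 + 1 ≤ s) :
    IsDigitalAnomaly ((s ^ 2 + d) * d ^ 2) (s * d) ((s ^ 2 + d) * s) 1 ∧
      Nat.gcd ((s ^ 2 + d) * d ^ 2) (s * d) = d :=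
  gcd_d_digitalAnomaly_family_general d s hd hcop hsd
end

section
/- Assume the abc conjecture: for every fixed real ε > 0, the set of triples (a, b, c) of pairwise coprime positive integers with a + b = c, a < b, and rad(abc) < c^(1/(1+ε)) is finite, where rad(γ) denotes the product of the distinct prime factors of γ. Then for each fixed integer k ≥ 3, the set of triples of positive integers (x, y, B) such that (x, y, B, k) is a digital anomaly is finite. -/
/-- The radical of a positive integer: the product of its distinct prime factors. -/
def rad (n : ℕ) : ℕ := n.primeFactors.prod id

lemma rad_le_of_primeFactors_subset {m n : ℕ} (hn : 0 < n)
    (h : m.primeFactors ⊆ n.primeFactors) : rad m ≤ n := by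
  have h1 : rad m ≤ rad n := by
    apply Finset.prod_le_prod_of_subset_of_one_le' h
    intro i hi _
    exact (Nat.prime_of_mem_primeFactors hi).one_lt.le
  have h2 : rad n ∣ n := Nat.prod_primeFactors_dvd n
  exact h1.trans (Nat.le_of_dvd hn h2)


-- basic nat consequences
lemma anomaly_nat (x y B k : ℕ) (h : IsDigitalAnomaly x y B k) :
    y < B ^ k ∧ x * (B ^ k - y) = y ^ 2 * B ^ k ∧ y ^ 2 < B ^ k - y := by
  obtain ⟨hx, hy, hB, hk, heq, hlo, hhi⟩ := h
  have hy0 : (y:ℚ) ≠ 0 := by positivity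
  have hB0 : ((B:ℚ))^k ≠ 0 := by positivity
  have hQ : (x:ℚ) * B^k = y^2 * B^k + x*y := by
    field_simp at heq; linarith [heq]
  have hnat : x * B^k = y^2 * B^k + x*y := by exact_mod_cast hQ
  have hyN : y < B ^ k := by nlinarith [hnat, hx, hy]
  have hmain : x * (B ^ k - y) = y ^ 2 * B ^ k := by
    have h1 : x * (B ^ k - y) = x * B ^ k - x * y := by
      rw [Nat.mul_sub]
    omega
  have hsq : y ^ 2 < B ^ k - y := by
    have hm : 0 < B ^ k - y := by omega
    have : y ^ 2 * B ^ k < B ^ k * (B ^ k - y) := by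
      rw [← hmain]; exact Nat.mul_lt_mul_of_lt_of_le hhi (le_refl _) hm
    have hBk : 0 < B ^ k := by positivity
    nlinarith [this]
  exact ⟨hyN, hmain, hsq⟩

-- key structural lemma
lemma anomaly_triple (x y B k g a b c : ℕ) (hk : 3 ≤ k)
    (hx : 0 < x) (hy : 0 < y) (hB : 2 ≤ B)
    (hyN : y < B ^ k) (hmain : x * (B ^ k - y) = y ^ 2 * B ^ k)
    (hsq : y ^ 2 < B ^ k - y)
    (hg : g = Nat.gcd y (B ^ k)) (ha : a = y / g) (hb : b = (B ^ k - y) / g)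
    (hc : c = B ^ k / g) :
    0 < a ∧ 0 < b ∧ 0 < c ∧ Nat.Coprime a b ∧ Nat.Coprime a c ∧ Nat.Coprime b c ∧
      a + b = c ∧ a < b ∧ rad (a * b * c) ≤ a * B ∧
      a ^ 2 * g < c ∧ B ^ 3 ≤ c * g ∧ g ≤ c ∧
      a * g = y ∧ c * g = B ^ k := by
  have hN : 0 < B ^ k := by positivity
  have hg0 : 0 < g := by
    rw [hg]; exact Nat.gcd_pos_of_pos_left _ hy
  have hgy : g ∣ y := hg ▸ Nat.gcd_dvd_left _ _
  have hgN : g ∣ B ^ k := hg ▸ Nat.gcd_dvd_right _ _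
  have hag : a * g = y := by rw [ha]; exact Nat.div_mul_cancel hgy
  have hcg : c * g = B ^ k := by rw [hc]; exact Nat.div_mul_cancel hgN
  have ha0 : 0 < a := by
    rcases Nat.eq_zero_or_pos a with h0 | h; · simp [h0] at hag; omega
    · exact h
  have hc0 : 0 < c := by
    rcases Nat.eq_zero_or_pos c with h0 | h; · simp [h0] at hcg; omega
    · exact h
  have hac : a < c := by
    have : a * g < c * g := by rw [hag, hcg]; exact hyN
    exact Nat.lt_of_mul_lt_mul_right this
  have habc : a + b = c := by
    have hbg : b * g = B ^ k - y := by
      rw [hb]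
      refine Nat.div_mul_cancel ?_
      exact (Nat.dvd_sub hgN hgy)
    have : (a + b) * g = c * g := by
      rw [Nat.add_mul, hag, hbg, hcg]; omega
    exact Nat.eq_of_mul_eq_mul_right hg0 this
  have hbg : b * g = B ^ k - y := by
    have : (a + b) * g = c * g := by rw [habc]
    rw [Nat.add_mul, hag] at this
    omega
  have hb0 : 0 < b := by
    rcases Nat.eq_zero_or_pos b with h0 | h; · simp [h0] at hbg; omega
    · exact h
  have hcop_ac : Nat.Coprime a c := by
    rw [ha, hc, hg]
    exact Nat.coprime_div_gcd_div_gcd (hg ▸ hg0)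
  have hcop_ab : Nat.Coprime a b := by
    have hd : Nat.gcd a b ∣ Nat.gcd a c :=
      Nat.dvd_gcd (Nat.gcd_dvd_left _ _)
        (habc ▸ Nat.dvd_add (Nat.gcd_dvd_left _ _) (Nat.gcd_dvd_right _ _))
    exact Nat.eq_one_of_dvd_one (hcop_ac ▸ hd)
  have hcop_bc : Nat.Coprime b c := by
    have hd : Nat.gcd b c ∣ Nat.gcd a c := by
      refine Nat.dvd_gcd ?_ (Nat.gcd_dvd_right _ _)
      have : a = c - b := by omega
      rw [this]
      exact Nat.dvd_sub (Nat.gcd_dvd_right _ _) (Nat.gcd_dvd_left _ _)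
    exact Nat.eq_one_of_dvd_one (hcop_ac ▸ hd)
  -- a < b
  have hab : a < b := by
    have hy2 : y < B ^ k - y := by nlinarith [hsq, hy]
    have : a * g < b * g := by rw [hag, hbg]; exact hy2
    exact Nat.lt_of_mul_lt_mul_right this
  -- m divides y^2 * B^k
  have hmdvd : (B ^ k - y) ∣ y ^ 2 * B ^ k := ⟨x, by rw [← hmain]; ring⟩
  -- rad bound
  have hrad : rad (a * b * c) ≤ a * B := by
    have haB : 0 < a * B := by positivity
    apply rad_le_of_primeFactors_subset haB
    intro p hp
    have hpp : p.Prime := Nat.prime_of_mem_primeFactors hp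
    have hpd : p ∣ a * b * c := Nat.dvd_of_mem_primeFactors hp
    have habc0 : a * b * c ≠ 0 := by positivity
    have hpB_of_N : p ∣ B ^ k → p ∣ B := fun h => hpp.dvd_of_dvd_pow h
    have key : p ∣ a ∨ p ∣ B := by
      rcases (hpp.dvd_mul.mp hpd) with hab' | hc'
      · rcases hpp.dvd_mul.mp hab' with hA | hB'
        · exact Or.inl hA
        · -- p ∣ b
          have hpm : p ∣ y ^ 2 * B ^ k := dvd_trans (dvd_trans hB' ⟨g, rfl⟩) (hbg ▸ hmdvd)
          rcases hpp.dvd_mul.mp hpm with hy' | hN'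
          · have hpy : p ∣ y := hpp.dvd_of_dvd_pow hy'
            have : p ∣ a * g := hag ▸ hpy
            rcases hpp.dvd_mul.mp this with h1 | h2
            · exact Or.inl h1
            · exact Or.inr (hpB_of_N (dvd_trans h2 hgN))
          · exact Or.inr (hpB_of_N hN')
      · -- p ∣ c
        have : p ∣ B ^ k := dvd_trans hc' ⟨g, hcg.symm⟩
        exact Or.inr (hpB_of_N this)
    rw [Nat.mem_primeFactors]
    refine ⟨hpp, ?_, by positivity⟩
    rcases key with h | h
    · exact Dvd.dvd.mul_right h B
    · exact Dvd.dvd.mul_left h a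
  -- size bounds
  have hsize : a ^ 2 * g < c := by
    have h1 : (a * g) ^ 2 < c * g := by
      rw [hag, hcg]
      calc y ^ 2 < B ^ k - y := hsq
        _ ≤ B ^ k := Nat.sub_le _ _
    have h2 : a ^ 2 * g * g < c * g := by
      calc a ^ 2 * g * g = (a * g) ^ 2 := by ring
        _ < c * g := h1
    exact Nat.lt_of_mul_lt_mul_right h2
  have hB3 : B ^ 3 ≤ c * g := by
    rw [hcg]
    exact Nat.pow_le_pow_right (by omega) hk
  have hgc : g ≤ c := by
    have : g ≤ a ^ 2 * g := Nat.le_mul_of_pos_left g (by positivity)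
    omega
  exact ⟨ha0, hb0, hc0, hcop_ab, hcop_ac, hcop_bc, habc, hab, hrad, hsize, hB3, hgc, hag, hcg⟩

lemma pow6_lt (a B c g : ℕ) (ha : 0 < a) (hg : 0 < g) (hc : 0 < c)
    (hsize : a ^ 2 * g < c) (hB3 : B ^ 3 ≤ c * g) : (a * B) ^ 6 < c ^ 5 := by
  have h1 : B ^ 6 ≤ (c * g) ^ 2 := by
    calc B ^ 6 = (B ^ 3) ^ 2 := by ring
      _ ≤ (c * g) ^ 2 := Nat.pow_le_pow_left hB3 2
  have h2 : (a ^ 2 * g) ^ 2 < c ^ 2 := Nat.pow_lt_pow_left hsize (by norm_num)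
  have h3 : a ^ 2 < c := by
    have : a ^ 2 ≤ a ^ 2 * g := Nat.le_mul_of_pos_right _ hg
    omega
  have k1 : (a ^ 2 * g) ^ 2 * a ^ 2 < c ^ 2 * c :=
    Nat.mul_lt_mul'' h2 h3
  calc (a * B) ^ 6 = a ^ 6 * B ^ 6 := by ring
    _ ≤ a ^ 6 * (c * g) ^ 2 := Nat.mul_le_mul_left _ h1
    _ = ((a ^ 2 * g) ^ 2 * a ^ 2) * c ^ 2 := by ring
    _ < (c ^ 2 * c) * c ^ 2 := by
        exact Nat.mul_lt_mul_of_lt_of_le k1 (le_refl _) (by positivity)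
    _ = c ^ 5 := by ring

lemma rad_lt_rpow (r m c : ℕ) (hr : r ≤ m) (h6 : m ^ 6 < c ^ 5) (hc : 0 < c) :
    (r : ℝ) < (c : ℝ) ^ ((1 : ℝ) / (1 + 1/5)) := by
  have he : ((1:ℝ)/(1 + 1/5)) = 5/6 := by norm_num
  rw [he]
  have hc0 : (0:ℝ) ≤ c := by positivity
  by_contra hcon
  push_neg at hcon
  have h1 : ((c:ℝ) ^ ((5:ℝ)/6)) ^ (6:ℕ) ≤ (r:ℝ) ^ (6:ℕ) :=
    pow_le_pow_left₀ (Real.rpow_nonneg hc0 _) hcon 6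
  have h2 : ((c:ℝ) ^ ((5:ℝ)/6)) ^ (6:ℕ) = (c:ℝ) ^ (5:ℕ) := by
    rw [← Real.rpow_natCast ((c:ℝ) ^ ((5:ℝ)/6)) 6, ← Real.rpow_mul hc0,
      ← Real.rpow_natCast (c:ℝ) 5]
    norm_num
  have h3 : (r:ℝ) ^ (6:ℕ) ≤ (m:ℝ) ^ (6:ℕ) :=
    pow_le_pow_left₀ (by positivity) (by exact_mod_cast hr) 6
  have h4 : ((m:ℝ)) ^ (6:ℕ) < (c:ℝ) ^ (5:ℕ) := by exact_mod_cast h6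
  rw [h2] at h1
  linarith

theorem digitalAnomaly_finite_fixed_exponent
    (abc : ∀ ε : ℝ, 0 < ε →
      {T : ℕ × ℕ × ℕ | 0 < T.1 ∧ 0 < T.2.1 ∧ 0 < T.2.2 ∧
        Nat.Coprime T.1 T.2.1 ∧ Nat.Coprime T.1 T.2.2 ∧ Nat.Coprime T.2.1 T.2.2 ∧
        T.1 + T.2.1 = T.2.2 ∧ T.1 < T.2.1 ∧
        (rad (T.1 * T.2.1 * T.2.2) : ℝ) < (T.2.2 : ℝ) ^ ((1 : ℝ) / (1 + ε))}.Finite)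
    (k : ℕ) (hk : 3 ≤ k) :
    {p : ℕ × ℕ × ℕ | IsDigitalAnomaly p.1 p.2.1 p.2.2 k}.Finite := by
  classical
  have hS := abc (1/5) (by norm_num)
  set Sset := {T : ℕ × ℕ × ℕ | 0 < T.1 ∧ 0 < T.2.1 ∧ 0 < T.2.2 ∧
        Nat.Coprime T.1 T.2.1 ∧ Nat.Coprime T.1 T.2.2 ∧ Nat.Coprime T.2.1 T.2.2 ∧
        T.1 + T.2.1 = T.2.2 ∧ T.1 < T.2.1 ∧
        (rad (T.1 * T.2.1 * T.2.2) : ℝ) < (T.2.2 : ℝ) ^ ((1 : ℝ) / (1 + 1/5))} with hSdef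
  let F : ℕ × ℕ × ℕ → (ℕ × ℕ × ℕ) × ℕ := fun p =>
    ((p.2.1 / Nat.gcd p.2.1 (p.2.2 ^ k),
      (p.2.2 ^ k - p.2.1) / Nat.gcd p.2.1 (p.2.2 ^ k),
      p.2.2 ^ k / Nat.gcd p.2.1 (p.2.2 ^ k)),
     Nat.gcd p.2.1 (p.2.2 ^ k))
  apply Set.Finite.of_finite_image (f := F)
  · -- the image is finite
    have hfin : (⋃ T ∈ Sset, (({T} : Set (ℕ × ℕ × ℕ)) ×ˢ Set.Iic T.2.2)).Finite :=
      hS.biUnion (fun T _ => (Set.finite_singleton T).prod (Set.finite_Iic _))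
    refine hfin.subset ?_
    rintro q ⟨p, hp, rfl⟩
    obtain ⟨x, y, B⟩ := p
    simp only [Set.mem_setOf_eq] at hp
    obtain ⟨hx, hy, hB, hk0, heq, hlo, hhi⟩ := hp
    obtain ⟨hyN, hmain, hsq⟩ := anomaly_nat x y B k ⟨hx, hy, hB, hk0, heq, hlo, hhi⟩
    obtain ⟨ha0, hb0, hc0, cab, cac, cbc, habc, hab, hrad, hsize, hB3, hgc, hag, hcg⟩ :=
      anomaly_triple x y B k (Nat.gcd y (B ^ k)) (y / Nat.gcd y (B ^ k))
        ((B ^ k - y) / Nat.gcd y (B ^ k)) (B ^ k / Nat.gcd y (B ^ k)) hk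
        hx hy hB hyN hmain hsq rfl rfl rfl rfl
    set g := Nat.gcd y (B ^ k)
    set a := y / g
    set b := (B ^ k - y) / g
    set c := B ^ k / g
    have hmem : ((a, b, c) : ℕ × ℕ × ℕ) ∈ Sset := by
      refine ⟨ha0, hb0, hc0, cab, cac, cbc, habc, hab, ?_⟩
      have hg0 : 0 < g := Nat.gcd_pos_of_pos_left _ hy
      exact rad_lt_rpow _ (a * B) c hrad (pow6_lt a B c g ha0 hg0 hc0 hsize hB3) hc0
    refine Set.mem_biUnion hmem ?_
    exact ⟨rfl, hgc⟩
  · -- F is injective on the anomaly set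
    rintro ⟨x1, y1, B1⟩ hp ⟨x2, y2, B2⟩ hq hFeq
    simp only [Set.mem_setOf_eq] at hp hq
    obtain ⟨hyN1, hmain1, hsq1⟩ := anomaly_nat _ _ _ _ hp
    obtain ⟨hyN2, hmain2, hsq2⟩ := anomaly_nat _ _ _ _ hq
    obtain ⟨hx1, hy1, hB1, -, -, -, -⟩ := hp
    obtain ⟨hx2, hy2, hB2, -, -, -, -⟩ := hq
    simp only [F, Prod.mk.injEq] at hFeq
    obtain ⟨⟨ha, hb, hc⟩, hgeq⟩ := hFeq
    have hg1 : Nat.gcd y1 (B1 ^ k) ∣ y1 := Nat.gcd_dvd_left _ _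
    have hg2 : Nat.gcd y2 (B2 ^ k) ∣ y2 := Nat.gcd_dvd_left _ _
    have hgN1 : Nat.gcd y1 (B1 ^ k) ∣ B1 ^ k := Nat.gcd_dvd_right _ _
    have hgN2 : Nat.gcd y2 (B2 ^ k) ∣ B2 ^ k := Nat.gcd_dvd_right _ _
    have hy12 : y1 = y2 := by
      have e1 : y1 / Nat.gcd y1 (B1 ^ k) * Nat.gcd y1 (B1 ^ k) = y1 := Nat.div_mul_cancel hg1
      have e2 : y2 / Nat.gcd y2 (B2 ^ k) * Nat.gcd y2 (B2 ^ k) = y2 := Nat.div_mul_cancel hg2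
      rw [← e1, ← e2, ha, hgeq]
    have hN12 : B1 ^ k = B2 ^ k := by
      have e1 : B1 ^ k / Nat.gcd y1 (B1 ^ k) * Nat.gcd y1 (B1 ^ k) = B1 ^ k :=
        Nat.div_mul_cancel hgN1
      have e2 : B2 ^ k / Nat.gcd y2 (B2 ^ k) * Nat.gcd y2 (B2 ^ k) = B2 ^ k :=
        Nat.div_mul_cancel hgN2
      rw [← e1, ← e2, hc, hgeq]
    have hB12 : B1 = B2 := Nat.pow_left_injective (by omega) hN12
    have hx12 : x1 = x2 := by
      have hm : 0 < B1 ^ k - y1 := by omega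
      rw [hy12, hB12] at hmain1 hm
      exact Nat.eq_of_mul_eq_mul_right hm (hmain1.trans hmain2.symm)
    simp [hx12, hy12, hB12]
end
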